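/- arXiv:0809.3818 — 3 statements merged into one kernel-verified Lean document; each statement's English description precedes it below -/
import Mathlib

section
/- Let a > 0, b ≥ 0, c > 0, u₀ ∈ ℝ, and let u be an axisymmetric stationary rotating profile on [0, c] with u(0) = u₀, i.e. u is differentiable on [0, c] and u'(r)/√(1 + u'(r)²) = r(a r² + 2b)/4 for all r ∈ [0, c]. Set R = c √(1 + u'(c)²)/u'(c), y(r) = R + u₀ − √(R² − r²), and w(r) = y(r) − y(c) + u(c). Then w(r) < u(r) for all r with 0 ≤ r < c. -/
/-!
The profile equation says that the sine of the inclination angle of `u`, namely `u'/√(1 + u'²)`,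
equals `f(r) = r(ar² + 2b)/4`, while for a lower circle of radius `R` it equals `r/R`. The choice
of `R` makes the two agree at `r = c`, i.e. `R = c/f(c) = 4/(ac² + 2b)`, and `R > c` because a
sine is below `1`. Since `a > 0`, `f(r) < r/R` on `(0, c)`, so by monotonicity of
`x ↦ x/√(1 + x²)` the profile is strictly less steep than the circle there. Hence `u - w` strictly
decreases on `[0, c]`, and it vanishes at `c`.
-/

open Set Real

theorem strictMono_div_sqrt_one_add_sq : StrictMono fun x : ℝ => x / √(1 + x ^ 2) := by
  simpa only [sin_arctan] using sin_arctan_strictMono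

theorem div_sqrt_one_add_sq_lt_one (x : ℝ) : x / √(1 + x ^ 2) < 1 := by
  rw [← sin_arctan, ← sin_pi_div_two]
  exact strictMonoOn_sin (Ioo_subset_Icc_self (arctan_mem_Ioo x))
    ⟨by linarith [pi_pos], le_rfl⟩ (arctan_mem_Ioo x).2

theorem hasDerivAt_sqrt_sq_sub_sq {R s : ℝ} (hs : s ^ 2 < R ^ 2) :
    HasDerivAt (fun t => √(R ^ 2 - t ^ 2)) (-(s / √(R ^ 2 - s ^ 2))) s := by
  have hpos : R ^ 2 - s ^ 2 ≠ 0 := by linarith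
  convert ((hasDerivAt_pow 2 s).const_sub (R ^ 2)).sqrt hpos using 1
  field_simp
  ring

theorem div_sqrt_one_add_sq_circle_slope {R s : ℝ} (hR : 0 < R) (hs : s ^ 2 < R ^ 2) :
    s / √(R ^ 2 - s ^ 2) / √(1 + (s / √(R ^ 2 - s ^ 2)) ^ 2) = s / R := by
  have hpos : 0 < R ^ 2 - s ^ 2 := by linarith
  have hsq : 1 + (s / √(R ^ 2 - s ^ 2)) ^ 2 = (R / √(R ^ 2 - s ^ 2)) ^ 2 := by
    rw [div_pow, div_pow, sq_sqrt hpos.le]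
    field_simp
    ring
  rw [hsq, sqrt_sq (by positivity), div_div_div_cancel_right₀ (sqrt_pos.2 hpos).ne']

theorem lt_circle_slope_of_div_sqrt_one_add_sq_lt {x R s : ℝ} (hR : 0 < R) (hs : s ^ 2 < R ^ 2)
    (h : x / √(1 + x ^ 2) < s / R) : x < s / √(R ^ 2 - s ^ 2) := by
  rwa [← strictMono_div_sqrt_one_add_sq.lt_iff_lt, div_sqrt_one_add_sq_circle_slope hR hs]

theorem strictAntiOn_sub_of_hasDerivAt_lt {f g f' g' : ℝ → ℝ} {l r : ℝ}
    (hf : ContinuousOn f (Icc l r)) (hg : ContinuousOn g (Icc l r))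
    (hf' : ∀ x ∈ Ioo l r, HasDerivAt f (f' x) x) (hg' : ∀ x ∈ Ioo l r, HasDerivAt g (g' x) x)
    (hlt : ∀ x ∈ Ioo l r, f' x < g' x) : StrictAntiOn (f - g) (Icc l r) := by
  refine strictAntiOn_of_deriv_neg (convex_Icc l r) (hf.sub hg) fun x hx => ?_
  rw [interior_Icc] at hx
  rw [((hf' x hx).sub (hg' x hx)).deriv]
  linarith [hlt x hx]

theorem stmt_2_general (a b c u₀ : ℝ) (ha : 0 < a) (hb : 0 ≤ b)
    (u u' : ℝ → ℝ)
    (hu : ∀ r ∈ Icc (0:ℝ) c, HasDerivAt u (u' r) r)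
    (heq : ∀ r ∈ Icc (0:ℝ) c, u' r / Real.sqrt (1 + u' r ^ 2) = r * (a * r ^ 2 + 2 * b) / 4) :
    ∀ R : ℝ, R = c * Real.sqrt (1 + u' c ^ 2) / u' c →
      ∀ y : ℝ → ℝ, (∀ s, y s = R + u₀ - Real.sqrt (R ^ 2 - s ^ 2)) →
        ∀ w : ℝ → ℝ, (∀ s, w s = y s - y c + u c) →
          ∀ r, 0 ≤ r → r < c → w r < u r := by
  rintro R hR y hy w hw r hr hrc
  have hc : 0 < c := hr.trans_lt hrc
  have hk : 0 < a * c ^ 2 + 2 * b := by positivity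
  have hRk : R = 4 / (a * c ^ 2 + 2 * b) := by
    rw [hR, ← div_div_eq_mul_div, heq c ⟨hc.le, le_rfl⟩]
    field_simp
  have hcR : c < R := by
    have := div_sqrt_one_add_sq_lt_one (u' c)
    rw [heq c ⟨hc.le, le_rfl⟩] at this
    rw [hRk, lt_div_iff₀ hk]
    linarith
  have hsR : ∀ s ∈ Ioo 0 c, s ^ 2 < R ^ 2 := fun s hs => by nlinarith [hs.1, hs.2]
  have hy_eq : y = fun s => R + u₀ - √(R ^ 2 - s ^ 2) := funext hy
  have hy' : ∀ s ∈ Ioo 0 c, HasDerivAt y (s / √(R ^ 2 - s ^ 2)) s := fun s hs => by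
    simpa only [hy_eq, neg_neg] using (hasDerivAt_sqrt_sq_sub_sq (hsR s hs)).const_sub (R + u₀)
  have hslope : ∀ s ∈ Ioo 0 c, u' s < s / √(R ^ 2 - s ^ 2) := fun s hs => by
    refine lt_circle_slope_of_div_sqrt_one_add_sq_lt (hc.trans hcR) (hsR s hs) ?_
    rw [heq s (Ioo_subset_Icc_self hs), hRk, div_div_eq_mul_div]
    have : 0 < a * s * (c ^ 2 - s ^ 2) := mul_pos (mul_pos ha hs.1) (by nlinarith [hs.1, hs.2])
    field_simp
    nlinarith
  have hanti : StrictAntiOn (u - y) (Icc 0 c) :=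
    strictAntiOn_sub_of_hasDerivAt_lt (fun s hs => (hu s hs).continuousAt.continuousWithinAt)
      (by rw [hy_eq]; fun_prop) (fun s hs => hu s (Ioo_subset_Icc_self hs)) hy' hslope
  have := hanti ⟨hr, hrc.le⟩ ⟨hc.le, le_rfl⟩ hrc
  simp only [Pi.sub_apply] at this
  rw [hw]
  linarith

/-- Theorem (comparison with a lower circle): with `R = c√(1+u'(c)²)/u'(c)`,
`y(r) = R + u₀ - √(R² - r²)` and `w(r) = y(r) - y(c) + u(c)`, one has
`w(r) < u(r)` for `0 ≤ r < c`. -/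
theorem stmt_2 (a b c u₀ : ℝ) (ha : 0 < a) (hb : 0 ≤ b) (hc : 0 < c)
    (u u' : ℝ → ℝ)
    (hu : ∀ r ∈ Icc (0:ℝ) c, HasDerivAt u (u' r) r)
    (heq : ∀ r ∈ Icc (0:ℝ) c, u' r / Real.sqrt (1 + u' r ^ 2) = r * (a * r ^ 2 + 2 * b) / 4)
    (h0 : u 0 = u₀) :
    ∀ R : ℝ, R = c * Real.sqrt (1 + u' c ^ 2) / u' c →
      ∀ y : ℝ → ℝ, (∀ s, y s = R + u₀ - Real.sqrt (R ^ 2 - s ^ 2)) →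
        ∀ w : ℝ → ℝ, (∀ s, w s = y s - y c + u c) →
          ∀ r, 0 ≤ r → r < c → w r < u r :=
  stmt_2_general a b c u₀ ha hb u u' hu heq
end

section
/- Let a > 0, b ≥ 0, u₀ ∈ ℝ, and let c₀ be the unique positive root of x(a x² + 2b) = 4. Let u be an axisymmetric stationary rotating profile on [0, c₀) with u(0) = u₀, i.e. u is differentiable on [0, c₀) and u'(r)/√(1 + u'(r)²) = r(a r² + 2b)/4 for all r ∈ [0, c₀). Then u(r) ≤ u₀ + c₀ for all r ∈ [0, c₀), and the area integral satisfies 2π ∫₀^{c₀} r √(1 + u'(r)²) dr < 2π c₀². -/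
open Set MeasureTheory Real

/-!
Write the profile equation as `sin (arctan u') = r (a r² + 2b) / 4`. By the choice of `c₀`
the right-hand side is below `r / c₀`, the sine of the inclination of the lower hemisphere
`r ↦ u₀ + c₀ - √(c₀² - r²)` of radius `c₀`. Hence `0 ≤ u' < r / √(c₀² - r²)`: the profile
stays below that hemisphere, and its area element `r √(1 + u'²)` is strictly below the
hemisphere's `c₀ r / √(c₀² - r²)`, whose integral over `(0, c₀)` is `c₀²`.
-/

theorem sq_lt_sq_of_mem_Ioo {c r : ℝ} (hr : r ∈ Ioo 0 c) : r ^ 2 < c ^ 2 :=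
  pow_lt_pow_left₀ hr.2 hr.1.le two_ne_zero

theorem setIntegral_lt_setIntegral_of_forall_lt {α : Type*} [MeasurableSpace α] {μ : Measure α}
    {s : Set α} {f g : α → ℝ} (hs : MeasurableSet s) (hμs : μ s ≠ 0)
    (hf : IntegrableOn f s μ) (hg : IntegrableOn g s μ) (hfg : ∀ x ∈ s, f x < g x) :
    ∫ x in s, f x ∂μ < ∫ x in s, g x ∂μ := by
  have hsupp : s ⊆ Function.support fun x => g x - f x := fun x hx =>
    sub_ne_zero.2 (hfg x hx).ne'
  rw [← sub_pos, ← integral_sub hg hf, setIntegral_pos_iff_support_of_nonneg_ae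
    (ae_restrict_of_forall_mem hs fun x hx => sub_nonneg.2 (hfg x hx).le) (hg.sub hf),
    inter_eq_self_of_subset_right hsupp]
  exact pos_iff_ne_zero.2 hμs

theorem hasDerivAt_neg_sqrt_sq_sub_sq {c r : ℝ} (hr : r ^ 2 < c ^ 2) :
    HasDerivAt (fun x => -√(c ^ 2 - x ^ 2)) (r / √(c ^ 2 - r ^ 2)) r :=
  (((hasDerivAt_pow 2 r).const_sub (c ^ 2)).sqrt (sub_pos.2 hr).ne').fun_neg.congr_deriv (by
    field_simp
    norm_num)

theorem integrableOn_div_sqrt_sq_sub_sq (c : ℝ) :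
    IntegrableOn (fun r => r / √(c ^ 2 - r ^ 2)) (Ioc 0 c) :=
  intervalIntegral.integrableOn_deriv_of_nonneg (by fun_prop)
    (fun _ hr => hasDerivAt_neg_sqrt_sq_sub_sq (sq_lt_sq_of_mem_Ioo hr))
    fun _ hr => div_nonneg hr.1.le (sqrt_nonneg _)

theorem integral_div_sqrt_sq_sub_sq {c : ℝ} (hc : 0 ≤ c) :
    ∫ r in (0)..c, r / √(c ^ 2 - r ^ 2) = c := by
  rw [intervalIntegral.integral_eq_sub_of_hasDeriv_right_of_le hc (by fun_prop)
    (fun _ hr => (hasDerivAt_neg_sqrt_sq_sub_sq (sq_lt_sq_of_mem_Ioo hr)).hasDerivWithinAt)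
    ((intervalIntegrable_iff_integrableOn_Ioc_of_le hc).2 (integrableOn_div_sqrt_sq_sub_sq c))]
  simp [sqrt_sq hc]

theorem sqrt_one_add_div_sqrt_sq_sub_sq_sq {c r : ℝ} (hc : 0 < c) (hr : r ^ 2 < c ^ 2) :
    √(1 + (r / √(c ^ 2 - r ^ 2)) ^ 2) = c / √(c ^ 2 - r ^ 2) := by
  have hD : 0 < c ^ 2 - r ^ 2 := sub_pos.2 hr
  rw [div_pow, sq_sqrt hD.le, one_add_div hD.ne', sub_add_cancel, sqrt_div' _ hD.le, sqrt_sq hc.le]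

theorem sin_arctan_div_sqrt_sq_sub_sq {c r : ℝ} (hc : 0 < c) (hr : r ^ 2 < c ^ 2) :
    sin (arctan (r / √(c ^ 2 - r ^ 2))) = r / c := by
  have hD : 0 < √(c ^ 2 - r ^ 2) := sqrt_pos.2 (sub_pos.2 hr)
  rw [sin_arctan, sqrt_one_add_div_sqrt_sq_sub_sq_sq hc hr]
  field_simp

theorem integrableOn_and_setIntegral_lt_sq_of_lt {c : ℝ} (hc : 0 < c) {f : ℝ → ℝ}
    (hf : AEStronglyMeasurable f (volume.restrict (Ioo 0 c))) (hf0 : ∀ r ∈ Ioo 0 c, 0 ≤ f r)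
    (hlt : ∀ r ∈ Ioo 0 c, f r < c * (r / √(c ^ 2 - r ^ 2))) :
    IntegrableOn f (Ioo 0 c) ∧ ∫ r in Ioo 0 c, f r < c ^ 2 := by
  have hsphere : IntegrableOn (fun r => c * (r / √(c ^ 2 - r ^ 2))) (Ioo 0 c) :=
    ((integrableOn_div_sqrt_sq_sub_sq c).mono_set Ioo_subset_Ioc_self).const_mul c
  have hint : IntegrableOn f (Ioo 0 c) :=
    hsphere.integrable.mono' hf (ae_restrict_of_forall_mem measurableSet_Ioo fun r hr => by
      rw [norm_of_nonneg (hf0 r hr)]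
      exact (hlt r hr).le)
  refine ⟨hint, ?_⟩
  calc ∫ r in Ioo 0 c, f r < ∫ r in Ioo 0 c, c * (r / √(c ^ 2 - r ^ 2)) :=
        setIntegral_lt_setIntegral_of_forall_lt measurableSet_Ioo (by simp [hc]) hint hsphere hlt
    _ = c ^ 2 := by
      rw [integral_const_mul, ← integral_Ioc_eq_integral_Ioo,
        ← intervalIntegral.integral_of_le hc.le, integral_div_sqrt_sq_sub_sq hc.le, sq]

theorem rotating_rhs_lt_div {a b c r : ℝ} (ha : 0 < a) (hroot : c * (a * c ^ 2 + 2 * b) = 4)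
    (hr : r ∈ Ioo 0 c) : r * (a * r ^ 2 + 2 * b) / 4 < r / c := by
  have hc : 0 < c := hr.1.trans hr.2
  have hr0 := hr.1
  have hr2 := sq_lt_sq_of_mem_Ioo hr
  rw [show r / c = r * (a * c ^ 2 + 2 * b) / 4 by
    rw [div_eq_div_iff hc.ne' four_ne_zero]; linear_combination -r * hroot]
  gcongr

theorem slope_mem_Ico_of_div_sqrt_one_add_sq_eq {a b c r x : ℝ} (ha : 0 < a) (hb : 0 ≤ b)
    (hroot : c * (a * c ^ 2 + 2 * b) = 4) (hr : r ∈ Ioo 0 c)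
    (hx : x / √(1 + x ^ 2) = r * (a * r ^ 2 + 2 * b) / 4) :
    x ∈ Ico 0 (r / √(c ^ 2 - r ^ 2)) := by
  have hr0 := hr.1.le
  rw [← sin_arctan] at hx
  constructor
  · exact sin_arctan_nonneg.1 (hx ▸ by positivity)
  · rw [← sin_arctan_strictMono.lt_iff_lt, hx,
      sin_arctan_div_sqrt_sq_sub_sq (hr.1.trans hr.2) (sq_lt_sq_of_mem_Ioo hr)]
    exact rotating_rhs_lt_div ha hroot hr

theorem le_sub_sqrt_sq_sub_sq_of_hasDerivAt {u u' : ℝ → ℝ} {c r : ℝ}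
    (hu : ∀ x ∈ Ico 0 c, HasDerivAt u (u' x) x)
    (hle : ∀ x ∈ Ioo 0 c, u' x ≤ x / √(c ^ 2 - x ^ 2)) (hr : r ∈ Ico 0 c) :
    u r ≤ u 0 + c - √(c ^ 2 - r ^ 2) := by
  have hanti : AntitoneOn (fun x => u x - -√(c ^ 2 - x ^ 2)) (Ico 0 c) := by
    refine antitoneOn_of_hasDerivWithinAt_nonpos (convex_Ico 0 c)
      (f' := fun x => u' x - x / √(c ^ 2 - x ^ 2)) ?_ (fun x hx => ?_) fun x hx => ?_
    · exact ContinuousOn.sub (fun x hx => (hu x hx).continuousAt.continuousWithinAt)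
        (by fun_prop)
    · rw [interior_Ico] at hx
      exact ((hu x (Ioo_subset_Ico_self hx)).sub
        (hasDerivAt_neg_sqrt_sq_sub_sq (sq_lt_sq_of_mem_Ioo hx))).hasDerivWithinAt
    · rw [interior_Ico] at hx
      exact sub_nonpos.2 (hle x hx)
  have h := hanti ⟨le_rfl, hr.1.trans_lt hr.2⟩ hr hr.1
  simp only [sub_neg_eq_add, zero_pow two_ne_zero, sub_zero, sqrt_sq (hr.1.trans hr.2.le)] at h
  linarith

/-- Remark after Theorem 4.7: for a closed axisymmetric drop of type I,
`u(c₀) ≤ u₀ + c₀` (i.e. `u ≤ u₀ + c₀` on `[0, c₀)`) and the area of the lower half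
satisfies `2π ∫₀^{c₀} r√(1+u'²) dr < 2π c₀²`. -/
theorem stmt_14 (a b u₀ c₀ : ℝ) (ha : 0 < a) (hb : 0 ≤ b)
    (hc₀ : 0 < c₀) (hroot : c₀ * (a * c₀ ^ 2 + 2 * b) = 4)
    (u u' : ℝ → ℝ)
    (hu : ∀ r ∈ Ico (0:ℝ) c₀, HasDerivAt u (u' r) r)
    (heq : ∀ r ∈ Ico (0:ℝ) c₀, u' r / Real.sqrt (1 + u' r ^ 2) = r * (a * r ^ 2 + 2 * b) / 4)
    (h0 : u 0 = u₀) :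
    (∀ r ∈ Ico (0:ℝ) c₀, u r ≤ u₀ + c₀) ∧
      IntegrableOn (fun r => r * Real.sqrt (1 + u' r ^ 2)) (Ioo 0 c₀) ∧
      2 * Real.pi * ∫ r in Ioo (0:ℝ) c₀, r * Real.sqrt (1 + u' r ^ 2) <
        2 * Real.pi * c₀ ^ 2 := by
  have hslope : ∀ r ∈ Ioo 0 c₀, u' r ∈ Ico 0 (r / √(c₀ ^ 2 - r ^ 2)) := fun r hr =>
    slope_mem_Ico_of_div_sqrt_one_add_sq_eq ha hb hroot hr (heq r (Ioo_subset_Ico_self hr))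
  have harea : ∀ r ∈ Ioo 0 c₀, r * √(1 + u' r ^ 2) < c₀ * (r / √(c₀ ^ 2 - r ^ 2)) := by
    intro r hr
    obtain ⟨hnonneg, hlt⟩ := hslope r hr
    have hr0 := hr.1
    calc r * √(1 + u' r ^ 2) < r * √(1 + (r / √(c₀ ^ 2 - r ^ 2)) ^ 2) := by gcongr
      _ = c₀ * (r / √(c₀ ^ 2 - r ^ 2)) := by
        rw [sqrt_one_add_div_sqrt_sq_sub_sq_sq hc₀ (sq_lt_sq_of_mem_Ioo hr)]
        ring
  have hmeas :
      AEStronglyMeasurable (fun r => r * √(1 + u' r ^ 2)) (volume.restrict (Ioo 0 c₀)) := by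
    have := measurable_deriv u
    refine (by fun_prop : Measurable fun r => r * √(1 + deriv u r ^ 2)).aestronglyMeasurable.congr
      (ae_restrict_of_forall_mem measurableSet_Ioo fun r hr => ?_)
    simp only [(hu r (Ioo_subset_Ico_self hr)).deriv]
  obtain ⟨hint, hlt⟩ := integrableOn_and_setIntegral_lt_sq_of_lt hc₀ hmeas
    (fun r hr => mul_nonneg hr.1.le (sqrt_nonneg _)) harea
  refine ⟨fun r hr => ?_, hint, mul_lt_mul_of_pos_left hlt (by positivity)⟩
  have := le_sub_sqrt_sq_sub_sq_of_hasDerivAt hu (fun x hx => (hslope x hx).2.le) hr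
  linarith [sqrt_nonneg (c₀ ^ 2 - r ^ 2)]
end

section
/- Let a > 0, b ≥ 0, c > 0, u₀ ∈ ℝ, and let u be an axisymmetric stationary rotating profile on [0, c] with u(0) = u₀, i.e. u is differentiable on [0, c] and u'(t)/√(1 + u'(t)²) = t(a t² + 2b)/4 for all t ∈ [0, c]. For r ∈ (0, c] let A(r) = 2π ∫₀^r t √(1 + u'(t)²) dt. Then for every r ∈ (0, c]: u(r) − u₀ ≤ ((a r² + 2b)/(8π)) · A(r) < (4 − √(16 − r²(a r² + 2b)²)) / (a r² + 2b). -/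
/-!
Write `φ(t) = t(at² + 2b)/4` and `K = ar² + 2b`. Solving the first integral for `u'` gives
`u' = φ/√(1 - φ²)` and `√(1 + u'²) = 1/√(1 - φ²)`, so `A(r) = 2π ∫₀^r t/√(1 - φ²)`.
Since `φ(t) ≤ Kt/4` on `[0, r]`, integrating `u'` gives the first inequality. For the
second, `s ↦ 1/√(1 - s²)` is strictly increasing on `[0, 1)`, so replacing `φ(t)` by the
linear majorant `Kt/4` strictly increases the area integral, which then has the elementary
antiderivative `-(16/K²)√(1 - (Kt/4)²)`.
-/

open Set intervalIntegral

lemma one_sub_sq_div_sqrt_one_add_sq (x : ℝ) :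
    1 - (x / √(1 + x ^ 2)) ^ 2 = (1 + x ^ 2)⁻¹ := by
  have hpos : (0 : ℝ) < 1 + x ^ 2 := by positivity
  rw [div_pow, Real.sq_sqrt hpos.le]
  field_simp
  ring

section SolveForSlope

variable {x y : ℝ}

lemma sq_lt_one_of_div_sqrt_one_add_sq_eq (h : x / √(1 + x ^ 2) = y) : y ^ 2 < 1 := by
  rw [← sub_pos, ← h, one_sub_sq_div_sqrt_one_add_sq]
  positivity

lemma sqrt_one_add_sq_eq_of_div_sqrt_one_add_sq_eq (h : x / √(1 + x ^ 2) = y) :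
    √(1 + x ^ 2) = (√(1 - y ^ 2))⁻¹ := by
  rw [← h, one_sub_sq_div_sqrt_one_add_sq, Real.sqrt_inv, inv_inv]

lemma eq_div_sqrt_one_sub_sq_of_div_sqrt_one_add_sq_eq (h : x / √(1 + x ^ 2) = y) :
    x = y / √(1 - y ^ 2) := by
  rw [div_eq_mul_inv, ← sqrt_one_add_sq_eq_of_div_sqrt_one_add_sq_eq h, ← h, div_mul_cancel₀]
  positivity

end SolveForSlope

lemma strictMonoOn_inv_sqrt_one_sub_sq :
    StrictMonoOn (fun s : ℝ => (√(1 - s ^ 2))⁻¹) (Ico 0 1) := by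
  intro s hs t ht hst
  have ht2 : 0 < 1 - t ^ 2 := by nlinarith [ht.1, ht.2]
  refine inv_strictAnti₀ (Real.sqrt_pos.mpr ht2) (Real.sqrt_lt_sqrt ht2.le ?_)
  nlinarith [hs.1]

lemma continuousOn_div_sqrt_one_sub_sq {f g : ℝ → ℝ} {s : Set ℝ} (hf : ContinuousOn f s)
    (hg : ContinuousOn g s) (hg1 : ∀ t ∈ s, g t ^ 2 < 1) :
    ContinuousOn (fun t => f t / √(1 - g t ^ 2)) s :=
  hf.div (continuous_const.sub (continuous_pow 2) |>.comp_continuousOn hg).sqrt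
    fun t ht => (Real.sqrt_pos.mpr (sub_pos.mpr (hg1 t ht))).ne'

lemma integral_id_div_sqrt_one_sub_sq_mul {k r : ℝ} (hk : k ≠ 0) (hr : 0 ≤ r)
    (hkr : (k * r) ^ 2 < 1) :
    ∫ t in (0 : ℝ)..r, t / √(1 - (k * t) ^ 2) = (1 - √(1 - (k * r) ^ 2)) / k ^ 2 := by
  have hkt : ∀ t ∈ Icc 0 r, (k * t) ^ 2 < 1 := fun t ht => by
    have : (k * t) ^ 2 ≤ (k * r) ^ 2 := by
      rw [mul_pow, mul_pow]; gcongr; exacts [ht.1, ht.2]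
    linarith
  have hderiv : ∀ t ∈ uIcc 0 r,
      HasDerivAt (fun t => -√(1 - (k * t) ^ 2) / k ^ 2) (t / √(1 - (k * t) ^ 2)) t := by
    intro t ht
    rw [uIcc_of_le hr] at ht
    have hpos := sub_pos.mpr (hkt t ht)
    refine ((((hasDerivAt_id' t).const_mul k).fun_pow 2).const_sub 1).sqrt hpos.ne'
      |>.fun_neg.div_const (k ^ 2) |>.congr_deriv ?_
    field_simp
    ring
  rw [integral_eq_sub_of_hasDerivAt hderiv]
  · simp only [mul_zero, zero_pow two_ne_zero, sub_zero, Real.sqrt_one]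
    ring
  · exact (continuousOn_div_sqrt_one_sub_sq continuousOn_id (by fun_prop)
      hkt).intervalIntegrable_of_Icc hr

section CubicSlope

variable {a b r t : ℝ}

lemma mul_quadratic_div_four_le (ha : 0 ≤ a) (ht : t ∈ Icc 0 r) :
    t * (a * t ^ 2 + 2 * b) / 4 ≤ (a * r ^ 2 + 2 * b) / 4 * t := by
  have := ht.1
  calc t * (a * t ^ 2 + 2 * b) / 4 ≤ t * (a * r ^ 2 + 2 * b) / 4 := by gcongr; exact ht.2
    _ = (a * r ^ 2 + 2 * b) / 4 * t := by ring

lemma mul_quadratic_div_four_lt (ha : 0 < a) (ht : 0 < t) (htr : t < r) :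
    t * (a * t ^ 2 + 2 * b) / 4 < (a * r ^ 2 + 2 * b) / 4 * t := by
  calc t * (a * t ^ 2 + 2 * b) / 4 < t * (a * r ^ 2 + 2 * b) / 4 := by gcongr
    _ = (a * r ^ 2 + 2 * b) / 4 * t := by ring

end CubicSlope

section Profile

variable {φ : ℝ → ℝ} {k r : ℝ}

lemma sub_le_mul_integral_div_sqrt_one_sub_sq {u : ℝ → ℝ} (hr : 0 ≤ r)
    (hφ : ContinuousOn φ (Icc 0 r)) (hφ1 : ∀ t ∈ Icc 0 r, φ t ^ 2 < 1)
    (hu : ∀ t ∈ Icc 0 r, HasDerivAt u (φ t / √(1 - φ t ^ 2)) t)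
    (hφk : ∀ t ∈ Icc 0 r, φ t ≤ k * t) :
    u r - u 0 ≤ k * ∫ t in (0 : ℝ)..r, t / √(1 - φ t ^ 2) := by
  rw [← integral_eq_sub_of_hasDerivAt (by rwa [uIcc_of_le hr])
    ((continuousOn_div_sqrt_one_sub_sq hφ hφ hφ1).intervalIntegrable_of_Icc hr),
    ← integral_const_mul]
  refine integral_mono_on hr
    ((continuousOn_div_sqrt_one_sub_sq hφ hφ hφ1).intervalIntegrable_of_Icc hr)
    (((continuousOn_div_sqrt_one_sub_sq continuousOn_id hφ hφ1).intervalIntegrable_of_Icc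
      hr).const_mul k) fun t ht => ?_
  rw [mul_div_assoc']
  exact div_le_div_of_nonneg_right (hφk t ht) (Real.sqrt_nonneg _)

lemma integral_div_sqrt_one_sub_sq_lt (hr : 0 < r) (hφ : ContinuousOn φ (Icc 0 r))
    (hφ0 : ∀ t ∈ Icc 0 r, 0 ≤ φ t) (hφk : ∀ t ∈ Icc 0 r, φ t ≤ k * t) (hkr : (k * r) ^ 2 < 1)
    (hlt : ∃ s ∈ Ioc 0 r, φ s < k * s) :
    ∫ t in (0 : ℝ)..r, t / √(1 - φ t ^ 2) < ∫ t in (0 : ℝ)..r, t / √(1 - (k * t) ^ 2) := by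
  have hk : 0 ≤ k := nonneg_of_mul_nonneg_left ((hφ0 r ⟨hr.le, le_rfl⟩).trans
    (hφk r ⟨hr.le, le_rfl⟩)) hr
  have hkr' : k * r < 1 := (abs_lt_of_sq_lt_sq' (by simpa using hkr) zero_le_one).2
  have hkt : ∀ t ∈ Icc 0 r, k * t ∈ Ico 0 1 := fun t ht =>
    ⟨mul_nonneg hk ht.1, (mul_le_mul_of_nonneg_left ht.2 hk).trans_lt hkr'⟩
  have hφt : ∀ t ∈ Icc 0 r, φ t ∈ Ico 0 1 := fun t ht =>
    ⟨hφ0 t ht, (hφk t ht).trans_lt (hkt t ht).2⟩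
  have hsq : ∀ s ∈ Ico (0 : ℝ) 1, s ^ 2 < 1 := fun s hs => by nlinarith [hs.1, hs.2]
  refine integral_lt_integral_of_continuousOn_of_le_of_exists_lt hr
    (continuousOn_div_sqrt_one_sub_sq continuousOn_id hφ fun t ht => hsq _ (hφt t ht))
    (continuousOn_div_sqrt_one_sub_sq continuousOn_id (by fun_prop) fun t ht => hsq _ (hkt t ht))
    (fun t ht => ?_) ?_
  · have ht' : t ∈ Icc 0 r := Ioc_subset_Icc_self ht
    rw [div_eq_mul_inv, div_eq_mul_inv]
    exact mul_le_mul_of_nonneg_left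
      (strictMonoOn_inv_sqrt_one_sub_sq.monotoneOn (hφt t ht') (hkt t ht') (hφk t ht')) ht.1.le
  · obtain ⟨s, hs, hφs⟩ := hlt
    have hs' : s ∈ Icc 0 r := Ioc_subset_Icc_self hs
    refine ⟨s, hs', ?_⟩
    rw [div_eq_mul_inv, div_eq_mul_inv]
    exact mul_lt_mul_of_pos_left
      (strictMonoOn_inv_sqrt_one_sub_sq (hφt s hs') (hkt s hs') hφs) hs.1

end Profile

theorem stmt_15_general (a b c u₀ : ℝ) (ha : 0 < a) (hb : 0 ≤ b)
    (u u' : ℝ → ℝ)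
    (hu : ∀ t ∈ Icc (0:ℝ) c, HasDerivAt u (u' t) t)
    (heq : ∀ t ∈ Icc (0:ℝ) c, u' t / Real.sqrt (1 + u' t ^ 2) = t * (a * t ^ 2 + 2 * b) / 4)
    (h0 : u 0 = u₀) :
    ∀ r, 0 < r → r ≤ c →
      u r - u₀ ≤ (a * r ^ 2 + 2 * b) / (8 * Real.pi) *
          (2 * Real.pi * ∫ t in (0:ℝ)..r, t * Real.sqrt (1 + u' t ^ 2)) ∧
        (a * r ^ 2 + 2 * b) / (8 * Real.pi) *
            (2 * Real.pi * ∫ t in (0:ℝ)..r, t * Real.sqrt (1 + u' t ^ 2)) <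
          (4 - Real.sqrt (16 - r ^ 2 * (a * r ^ 2 + 2 * b) ^ 2)) / (a * r ^ 2 + 2 * b) := by
  intro r hr hrc
  set K := a * r ^ 2 + 2 * b
  set φ : ℝ → ℝ := fun t => t * (a * t ^ 2 + 2 * b) / 4
  have heq : ∀ t ∈ Icc 0 c, u' t / √(1 + u' t ^ 2) = φ t := heq
  have hsub : Icc 0 r ⊆ Icc 0 c := Icc_subset_Icc_right hrc
  have hK : 0 < K := by positivity
  have hφ0 : ∀ t ∈ Icc 0 r, 0 ≤ φ t := fun t ht => by have := ht.1; positivity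
  have hφK : ∀ t ∈ Icc 0 r, φ t ≤ K / 4 * t := fun t ht => mul_quadratic_div_four_le ha.le ht
  have hlt : ∃ s ∈ Ioc 0 r, φ s < K / 4 * s := ⟨r / 2, ⟨by positivity, by linarith⟩,
    mul_quadratic_div_four_lt ha (by positivity) (by linarith)⟩
  have hKr : (K / 4 * r) ^ 2 < 1 := by
    convert sq_lt_one_of_div_sqrt_one_add_sq_eq (heq r ⟨hr.le, hrc⟩) using 2
    ring
  have harea : ∫ t in (0 : ℝ)..r, t * √(1 + u' t ^ 2) = ∫ t in (0 : ℝ)..r, t / √(1 - φ t ^ 2) :=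
    integral_congr fun t ht => by
      rw [uIcc_of_le hr.le] at ht
      rw [sqrt_one_add_sq_eq_of_div_sqrt_one_add_sq_eq (heq t (hsub ht)), div_eq_mul_inv]
  rw [show ∀ x, K / (8 * Real.pi) * (2 * Real.pi * x) = K / 4 * x from fun x => by
    field_simp; ring, harea, ← h0]
  refine ⟨sub_le_mul_integral_div_sqrt_one_sub_sq hr.le (by fun_prop)
    (fun t ht => sq_lt_one_of_div_sqrt_one_add_sq_eq (heq t (hsub ht)))
    (fun t ht => eq_div_sqrt_one_sub_sq_of_div_sqrt_one_add_sq_eq (heq t (hsub ht)) ▸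
      hu t (hsub ht)) hφK, ?_⟩
  calc K / 4 * ∫ t in (0 : ℝ)..r, t / √(1 - φ t ^ 2)
      < K / 4 * ∫ t in (0 : ℝ)..r, t / √(1 - (K / 4 * t) ^ 2) := by
        gcongr; exact integral_div_sqrt_one_sub_sq_lt hr (by fun_prop) hφ0 hφK hKr hlt
    _ = K / 4 * ((1 - √(1 - (K / 4 * r) ^ 2)) / (K / 4) ^ 2) := by
        rw [integral_id_div_sqrt_one_sub_sq_mul (by positivity) hr.le hKr]
    _ = (4 - √(16 - r ^ 2 * K ^ 2)) / K := by
        rw [show 16 - r ^ 2 * K ^ 2 = 4 ^ 2 * (1 - (K / 4 * r) ^ 2) by ring,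
          Real.sqrt_mul (by norm_num), Real.sqrt_sq (by norm_num)]
        field_simp

/-- Corollary (height vs. area): with `A(r) = 2π ∫₀^r t√(1+u'(t)²) dt`, for every
`r ∈ (0, c]` one has
`u(r) - u₀ ≤ ((ar²+2b)/(8π)) A(r) < (4 - √(16 - r²(ar²+2b)²))/(ar²+2b)`. -/
theorem stmt_15 (a b c u₀ : ℝ) (ha : 0 < a) (hb : 0 ≤ b) (hc : 0 < c)
    (u u' : ℝ → ℝ)
    (hu : ∀ t ∈ Icc (0:ℝ) c, HasDerivAt u (u' t) t)
    (heq : ∀ t ∈ Icc (0:ℝ) c, u' t / Real.sqrt (1 + u' t ^ 2) = t * (a * t ^ 2 + 2 * b) / 4)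
    (h0 : u 0 = u₀) :
    ∀ r, 0 < r → r ≤ c →
      u r - u₀ ≤ (a * r ^ 2 + 2 * b) / (8 * Real.pi) *
          (2 * Real.pi * ∫ t in (0:ℝ)..r, t * Real.sqrt (1 + u' t ^ 2)) ∧
        (a * r ^ 2 + 2 * b) / (8 * Real.pi) *
            (2 * Real.pi * ∫ t in (0:ℝ)..r, t * Real.sqrt (1 + u' t ^ 2)) <
          (4 - Real.sqrt (16 - r ^ 2 * (a * r ^ 2 + 2 * b) ^ 2)) / (a * r ^ 2 + 2 * b) :=
  stmt_15_general a b c u₀ ha hb u u' hu heq h0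
end
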